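/- Let A be a g-tuple of d×d real symmetric matrices that is unitarily equivalent to a direct sum ⊕_{j=1}^ℓ A^j with A^j ∈ SM_{d_j}(ℝ)^g. If X ∈ D_A(n) is an Arveson extreme point of D_A, then gn ≤ Σ_{j=1}^ℓ d_j · k^j_{A,X}, where k^j_{A,X} = dim ker L_{A^j}(X). -/

import Mathlib

open Matrix
open scoped Kronecker

/-- The monic linear pencil `L_A(X) = I - Σ_i A_i ⊗ X_i`. -/
noncomputable def LA {g : ℕ} {D m : Type*} [Fintype D] [Fintype m] [DecidableEq D] [DecidableEq m]
    (A : Fin g → Matrix D D ℝ) (X : Fin g → Matrix m m ℝ) :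
    Matrix (D × m) (D × m) ℝ :=
  1 - ∑ i, A i ⊗ₖ X i

/-- Membership of the symmetric tuple `X` in the free spectrahedron `D_A`. -/
def InDA {g : ℕ} {D m : Type*} [Fintype D] [Fintype m] [DecidableEq D] [DecidableEq m]
    (A : Fin g → Matrix D D ℝ) (X : Fin g → Matrix m m ℝ) : Prop :=
  (∀ i, (X i).IsSymm) ∧ (LA A X).PosSemidef

/-- `X` is an Arveson extreme point of `D_A`: every dilation `[[X,β],[βᵀ,γ]] ∈ D_A`
forces `β = 0`. -/
def IsArvExt {g d n : ℕ} (A : Fin g → Matrix (Fin d) (Fin d) ℝ)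
    (X : Fin g → Matrix (Fin n) (Fin n) ℝ) : Prop :=
  InDA A X ∧ ∀ (k : ℕ) (β : Fin g → Matrix (Fin n) (Fin k) ℝ)
    (γ : Fin g → Matrix (Fin k) (Fin k) ℝ),
      InDA A (fun i => Matrix.fromBlocks (X i) (β i) (β i)ᵀ (γ i)) → β = 0

/-!
If `Λ_A(βᵀ) = Σ_i A_i ⊗ β_iᵀ` vanishes on `ker L_A(X)`, its transpose lies in the range of the
symmetric matrix `L_A(X)`, say `Λ_A(βᵀ)ᵀ = -L_A(X) C`. Then `L_A` of the dilation
`[[X, tβ], [tβᵀ, 0]]` is, up to reindexing, `[[L_A(X), t L_A(X) C], [t Cᵀ L_A(X), 1]]`, which is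
positive semidefinite for small `t > 0`, so Arveson extremality forces `β = 0`.
Since `U` intertwines `A` with `⊕_j A^j`, `Uᵀ ⊗ I` carries `ker L_A(X)` into
`⊕_j ker L_{A^j}(X)`; hence `β ↦ (Λ_{A^j}(βᵀ)|_{ker L_{A^j}(X)})_j` is an injective linear map
from `M_{n×1}(ℝ)^g` into `Π_j Hom(ker L_{A^j}(X), ℝ^{d_j})`, and comparing dimensions gives the
bound.
-/
theorem LinearMap.exists_comp_eq_of_ker_le {K V V' W : Type*} [DivisionRing K]
    [AddCommGroup V] [Module K V] [AddCommGroup V'] [Module K V'] [AddCommGroup W] [Module K W]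
    (f : V →ₗ[K] V') (g : V →ₗ[K] W) (h : LinearMap.ker f ≤ LinearMap.ker g) :
    ∃ h' : V' →ₗ[K] W, h' ∘ₗ f = g := by
  obtain ⟨h', hh'⟩ := LinearMap.exists_extend
    ((LinearMap.ker f).liftQ g h ∘ₗ f.quotKerEquivRange.symm.toLinearMap)
  refine ⟨h', LinearMap.ext fun v => ?_⟩
  have := LinearMap.congr_fun hh' ⟨f v, LinearMap.mem_range_self f v⟩
  simpa [LinearMap.quotKerEquivRange_symm_apply_image] using this

theorem Matrix.exists_transpose_eq_mul_of_ker_le {ι κ : Type*} [Fintype ι] [DecidableEq ι]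
    {P : Matrix ι ι ℝ} (hP : P.IsSymm) {Λ : Matrix κ ι ℝ}
    (h : LinearMap.ker P.mulVecLin ≤ LinearMap.ker Λ.mulVecLin) :
    ∃ C : Matrix ι κ ℝ, Λᵀ = P * C := by
  obtain ⟨h', hh'⟩ := LinearMap.exists_comp_eq_of_ker_le _ _ h
  refine ⟨(LinearMap.toMatrix' h')ᵀ, ?_⟩
  have hΛ : Λ = LinearMap.toMatrix' h' * P := by
    apply Matrix.toLin'.injective
    rw [Matrix.toLin'_mul, Matrix.toLin'_toMatrix']
    exact hh'.symm
  rw [hΛ, transpose_mul, hP.eq]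

open scoped MatrixOrder in
theorem Matrix.IsHermitian.exists_posDef_one_sub_smul {ι : Type*} [Fintype ι]
    [DecidableEq ι] {M : Matrix ι ι ℝ} (hM : M.IsHermitian) :
    ∃ s : ℝ, 0 < s ∧ (1 - s • M).PosDef := by
  obtain ⟨b, hb⟩ := (Matrix.finite_real_spectrum (A := M)).bddAbove
  set r := max b 1
  have hr : 0 < r := lt_max_of_lt_right one_pos
  have hMr : M ≤ algebraMap ℝ _ r :=
    le_algebraMap_of_spectrum_le fun x hx => (hb hx).trans (le_max_left _ _)
  refine ⟨(2 * r)⁻¹, by positivity, ?_⟩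
  have : 1 - (2 * r)⁻¹ • M = (2 * r)⁻¹ • (algebraMap ℝ _ r - M) + (2⁻¹ : ℝ) • 1 := by
    rw [smul_sub, Algebra.algebraMap_eq_smul_one, smul_smul,
      show (2 * r)⁻¹ * r = 2⁻¹ by field_simp]
    module
  rw [this]
  exact PosDef.posSemidef_add ((Matrix.le_iff.mp hMr).smul (by positivity))
    (PosDef.one.smul (by norm_num))

theorem Matrix.PosSemidef.exists_posSemidef_fromBlocks_smul_mul {ι κ : Type*} [Fintype ι]
    [Fintype κ] [DecidableEq ι] [DecidableEq κ] {P : Matrix ι ι ℝ} (hP : P.PosSemidef)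
    (C : Matrix ι κ ℝ) :
    ∃ t : ℝ, 0 < t ∧ (fromBlocks P (t • (P * C)) (t • (P * C))ᵀ 1).PosSemidef := by
  have hPt : Pᵀ = P := hP.isHermitian
  obtain ⟨s, hs, hQ⟩ :=
    (hP.conjTranspose_mul_mul_same C).isHermitian.exists_posDef_one_sub_smul
  refine ⟨√s, Real.sqrt_pos.mpr hs, ?_⟩
  have hdiag : (fromBlocks P 0 0 (1 - s • (Cᴴ * P * C))).PosSemidef := by
    have := hQ.isUnit.invertible
    simpa using (PosDef.fromBlocks₂₂ P 0 hQ).mpr (by simpa using hP)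
  -- `[[P, tPC], [tCᵀP, 1]] = Eᵀ [[P, 0], [0, 1 - t²CᵀPC]] E` with `E = [[1, tC], [0, 1]]`
  convert hdiag.conjTranspose_mul_mul_same (fromBlocks (1 : Matrix ι ι ℝ) (√s • C) 0 1) using 1
  simp only [conjTranspose_eq_transpose_of_trivial]
  rw [fromBlocks_transpose, fromBlocks_multiply, fromBlocks_multiply]
  simp [hPt, Matrix.mul_assoc, smul_smul, Real.mul_self_sqrt hs.le]

/-- The homogeneous pencil `Λ_A(Y) = Σ_i A_i ⊗ Y_i`, so that `L_A(X) = I - Λ_A(X)`. -/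
def homPencil {g : ℕ} {D m₁ m₂ : Type*} (A : Fin g → Matrix D D ℝ)
    (Y : Fin g → Matrix m₁ m₂ ℝ) : Matrix (D × m₁) (D × m₂) ℝ :=
  ∑ i, A i ⊗ₖ Y i

section Pencil

variable {g : ℕ} {D m₁ m₂ : Type*}

theorem LA_eq_one_sub_homPencil [Fintype D] [Fintype m₁] [DecidableEq D] [DecidableEq m₁]
    (A : Fin g → Matrix D D ℝ) (X : Fin g → Matrix m₁ m₁ ℝ) : LA A X = 1 - homPencil A X :=
  rfl

theorem homPencil_transpose (A : Fin g → Matrix D D ℝ) (Y : Fin g → Matrix m₁ m₂ ℝ) :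
    (homPencil A Y)ᵀ = homPencil (fun i => (A i)ᵀ) fun i => (Y i)ᵀ := by
  simp [homPencil, transpose_sum, kroneckerMap_transpose]

theorem homPencil_smul (A : Fin g → Matrix D D ℝ) (c : ℝ) (Y : Fin g → Matrix m₁ m₂ ℝ) :
    homPencil A (c • Y) = c • homPencil A Y := by
  simp [homPencil, kronecker_smul, Finset.smul_sum]

theorem LA_fromBlocks [Fintype D] [Fintype m₁] [Fintype m₂] [DecidableEq D] [DecidableEq m₁]
    [DecidableEq m₂] (A : Fin g → Matrix D D ℝ) (X : Fin g → Matrix m₁ m₁ ℝ)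
    (B : Fin g → Matrix m₁ m₂ ℝ) (C : Fin g → Matrix m₂ m₁ ℝ) (Z : Fin g → Matrix m₂ m₂ ℝ) :
    LA A (fun i => fromBlocks (X i) (B i) (C i) (Z i)) =
      (fromBlocks (LA A X) (-homPencil A B) (-homPencil A C) (LA A Z)).submatrix
        (Equiv.prodSumDistrib D m₁ m₂) (Equiv.prodSumDistrib D m₁ m₂) := by
  ext ⟨a, s | s⟩ ⟨b, s' | s'⟩ <;>
    simp [LA, homPencil, one_apply, Matrix.sub_apply, Matrix.sum_apply, Prod.ext_iff]

theorem homPencil_blockDiagonal'_mulVec_apply {ι : Type*} [Fintype ι] [DecidableEq ι]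
    {d : ι → Type*} [∀ j, Fintype (d j)] [Fintype m₂] (M : ∀ j, Fin g → Matrix (d j) (d j) ℝ)
    (Y : Fin g → Matrix m₁ m₂ ℝ) (v : (Σ j, d j) × m₂ → ℝ) (j : ι) (p : d j) (q : m₁) :
    (homPencil (fun i => blockDiagonal' fun j => M j i) Y *ᵥ v) (⟨j, p⟩, q) =
      (homPencil (M j) Y *ᵥ fun pr => v (⟨j, pr.1⟩, pr.2)) (p, q) := by
  simp only [homPencil, sum_mulVec, Finset.sum_apply]
  refine Finset.sum_congr rfl fun i _ => ?_
  simp only [mulVec, dotProduct, Fintype.sum_prod_type, kroneckerMap_apply, Fintype.sum_sigma]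
  rw [Finset.sum_eq_single j]
  · simp [blockDiagonal'_apply_eq]
  · intro j' _ hj'
    simp [blockDiagonal'_apply_ne _ _ _ (Ne.symm hj')]
  · simp

end Pencil

section Kernels

variable {g : ℕ} {D E m₁ m₂ : Type*} [Fintype D] [Fintype E] [Fintype m₁] [Fintype m₂]
  [DecidableEq m₁] [DecidableEq m₂]

theorem homPencil_mul_kronecker_one {A : Fin g → Matrix D D ℝ} {B : Fin g → Matrix E E ℝ}
    {U : Matrix D E ℝ} (hAB : ∀ i, A i * U = U * B i) (Y : Fin g → Matrix m₁ m₂ ℝ) :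
    homPencil A Y * (U ⊗ₖ (1 : Matrix m₂ m₂ ℝ)) =
      (U ⊗ₖ (1 : Matrix m₁ m₁ ℝ)) * homPencil B Y := by
  simp only [homPencil, Matrix.sum_mul, Matrix.mul_sum, ← mul_kronecker_mul, hAB,
    Matrix.one_mul, Matrix.mul_one]

theorem LA_mul_kronecker_one [DecidableEq D] [DecidableEq E] {A : Fin g → Matrix D D ℝ}
    {B : Fin g → Matrix E E ℝ} {U : Matrix D E ℝ} (hAB : ∀ i, A i * U = U * B i)
    (X : Fin g → Matrix m₁ m₁ ℝ) :
    LA A X * (U ⊗ₖ (1 : Matrix m₁ m₁ ℝ)) = (U ⊗ₖ (1 : Matrix m₁ m₁ ℝ)) * LA B X := by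
  rw [LA_eq_one_sub_homPencil, LA_eq_one_sub_homPencil, Matrix.sub_mul, Matrix.mul_sub,
    homPencil_mul_kronecker_one hAB, Matrix.one_mul, Matrix.mul_one]

theorem ker_LA_le_ker_homPencil_of_conj [DecidableEq D] [DecidableEq E]
    {A : Fin g → Matrix D D ℝ} {B : Fin g → Matrix E E ℝ} {U : Matrix D E ℝ}
    (hU : U * Uᵀ = 1) (hAB : ∀ i, Uᵀ * A i * U = B i)
    {X : Fin g → Matrix m₁ m₁ ℝ} {Y : Fin g → Matrix m₂ m₁ ℝ}
    (h : LinearMap.ker (LA B X).mulVecLin ≤ LinearMap.ker (homPencil B Y).mulVecLin) :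
    LinearMap.ker (LA A X).mulVecLin ≤ LinearMap.ker (homPencil A Y).mulVecLin := by
  have hAU : ∀ i, A i * U = U * B i := fun i => by
    rw [← hAB, ← Matrix.mul_assoc, ← Matrix.mul_assoc, hU, Matrix.one_mul]
  have hUA : ∀ i, B i * Uᵀ = Uᵀ * A i := fun i => by
    rw [← hAB, Matrix.mul_assoc _ U, hU, Matrix.mul_one]
  intro v hv
  rw [LinearMap.mem_ker, mulVecLin_apply] at hv ⊢
  set w := (Uᵀ ⊗ₖ (1 : Matrix m₁ m₁ ℝ)) *ᵥ v
  have hw : homPencil B Y *ᵥ w = 0 := h <| by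
    rw [LinearMap.mem_ker, mulVecLin_apply, mulVec_mulVec, LA_mul_kronecker_one hUA,
      ← mulVec_mulVec, hv, mulVec_zero]
  have hvw : v = (U ⊗ₖ (1 : Matrix m₁ m₁ ℝ)) *ᵥ w := by
    rw [mulVec_mulVec, ← mul_kronecker_mul, hU, Matrix.one_mul, one_kronecker_one, one_mulVec]
  rw [hvw, mulVec_mulVec, homPencil_mul_kronecker_one hAU, ← mulVec_mulVec, hw, mulVec_zero]

end Kernels

section BlockDiagonal

variable {g : ℕ} {ι m₁ m₂ : Type*} [Fintype ι] [DecidableEq ι] {d : ι → Type*}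
  [∀ j, Fintype (d j)] [∀ j, DecidableEq (d j)] [Fintype m₁] [DecidableEq m₁]
  {M : ∀ j, Fin g → Matrix (d j) (d j) ℝ}

theorem LA_blockDiagonal'_mulVec_apply (X : Fin g → Matrix m₁ m₁ ℝ) (v : (Σ j, d j) × m₁ → ℝ)
    (j : ι) (p : d j) (q : m₁) :
    (LA (fun i => blockDiagonal' fun j => M j i) X *ᵥ v) (⟨j, p⟩, q) =
      (LA (M j) X *ᵥ fun pr => v (⟨j, pr.1⟩, pr.2)) (p, q) := by
  simp only [LA_eq_one_sub_homPencil, sub_mulVec, one_mulVec, Pi.sub_apply,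
    homPencil_blockDiagonal'_mulVec_apply]

theorem ker_LA_blockDiagonal'_le_ker_homPencil {X : Fin g → Matrix m₁ m₁ ℝ}
    {Y : Fin g → Matrix m₂ m₁ ℝ}
    (h : ∀ j,
      LinearMap.ker (LA (M j) X).mulVecLin ≤ LinearMap.ker (homPencil (M j) Y).mulVecLin) :
    LinearMap.ker (LA (fun i => blockDiagonal' fun j => M j i) X).mulVecLin ≤
      LinearMap.ker (homPencil (fun i => blockDiagonal' fun j => M j i) Y).mulVecLin := by
  intro v hv
  rw [LinearMap.mem_ker, mulVecLin_apply] at hv ⊢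
  ext ⟨⟨j, p⟩, q⟩
  have hj : homPencil (M j) Y *ᵥ (fun pr => v (⟨j, pr.1⟩, pr.2)) = 0 := h j <| by
    rw [LinearMap.mem_ker, mulVecLin_apply]
    ext ⟨p', q'⟩
    rw [← LA_blockDiagonal'_mulVec_apply, hv]
    rfl
  rw [homPencil_blockDiagonal'_mulVec_apply, hj]
  rfl

end BlockDiagonal

theorem IsArvExt.eq_zero_of_ker_le {g d n k : ℕ} {A : Fin g → Matrix (Fin d) (Fin d) ℝ}
    (hA : ∀ i, (A i).IsSymm) {X : Fin g → Matrix (Fin n) (Fin n) ℝ} (hX : IsArvExt A X)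
    {β : Fin g → Matrix (Fin n) (Fin k) ℝ}
    (hβ : LinearMap.ker (LA A X).mulVecLin ≤
      LinearMap.ker (homPencil A fun i => (β i)ᵀ).mulVecLin) :
    β = 0 := by
  have hP : (LA A X).PosSemidef := hX.1.2
  obtain ⟨C, hC⟩ :=
    exists_transpose_eq_mul_of_ker_le (isHermitian_iff_isSymm.mp hP.isHermitian) hβ
  obtain ⟨t, ht, hdil⟩ := hP.exists_posSemidef_fromBlocks_smul_mul (-C)
  have hB : -homPencil A (t • β) = t • (LA A X * -C) := by
    rw [Matrix.mul_neg, ← hC, homPencil_smul, homPencil_transpose]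
    simp [(hA _).eq, smul_neg]
  have hY : InDA A fun i => fromBlocks (X i) ((t • β) i) ((t • β) i)ᵀ 0 := by
    refine ⟨fun i => (hX.1.1 i).fromBlocks rfl isSymm_zero, ?_⟩
    have hB' : -homPencil A (fun i => ((t • β) i)ᵀ) = (t • (LA A X * -C))ᵀ := by
      rw [← hB, transpose_neg, homPencil_transpose]
      simp [(hA _).eq]
    have hZ : LA A (fun _ => (0 : Matrix (Fin k) (Fin k) ℝ)) = 1 := by
      simp [LA_eq_one_sub_homPencil, homPencil]
    rw [LA_fromBlocks, hB, hB', hZ]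
    exact hdil.submatrix _
  have := hX.2 k (t • β) 0 hY
  exact (smul_eq_zero.mp this).resolve_left ht.ne'

/-- The paper's `β ↦ (Λ_{A^j}(βᵀ) P_{A^j,X})_j`, with the projection `P_{A^j,X}` onto
`ker L_{A^j}(X)` replaced by restriction to that kernel. -/
noncomputable def homPencilOnKer {g : ℕ} {ι m k : Type*} [Fintype m] [DecidableEq m]
    {d : ι → Type*} [∀ j, Fintype (d j)] [∀ j, DecidableEq (d j)]
    (M : ∀ j, Fin g → Matrix (d j) (d j) ℝ) (X : Fin g → Matrix m m ℝ) :
    (Fin g → Matrix m k ℝ) →ₗ[ℝ]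
      ∀ j, LinearMap.ker (LA (M j) X).mulVecLin →ₗ[ℝ] (d j × k → ℝ) where
  toFun β j := (homPencil (M j) fun i => (β i)ᵀ).mulVecLin.domRestrict _
  map_add' β β' := by
    ext j w : 2
    simp [homPencil, kronecker_add, Finset.sum_add_distrib]
  map_smul' c β := by
    ext j w : 2
    simp [homPencil, kronecker_smul, ← Finset.smul_sum]

theorem IsArvExt.injective_homPencilOnKer {g d n ℓ k : ℕ}
    {A : Fin g → Matrix (Fin d) (Fin d) ℝ} (hA : ∀ i, (A i).IsSymm) {dd : Fin ℓ → ℕ}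
    {Aj : ∀ j : Fin ℓ, Fin g → Matrix (Fin (dd j)) (Fin (dd j)) ℝ}
    {U : Matrix (Fin d) ((j : Fin ℓ) × Fin (dd j)) ℝ} (hU : U * Uᵀ = 1)
    (hUA : ∀ i, Uᵀ * A i * U = blockDiagonal' fun j => Aj j i)
    {X : Fin g → Matrix (Fin n) (Fin n) ℝ} (hX : IsArvExt A X) :
    Function.Injective (homPencilOnKer Aj X (k := Fin k)) := by
  refine (injective_iff_map_eq_zero _).mpr fun β hβ => hX.eq_zero_of_ker_le hA ?_
  refine ker_LA_le_ker_homPencil_of_conj hU hUA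
    (ker_LA_blockDiagonal'_le_ker_homPencil fun j w hw => ?_)
  simpa [homPencilOnKer] using LinearMap.congr_fun (congr_fun hβ j) ⟨w, hw⟩

theorem arveson_kernel_count_direct_sum_general {g d n ℓ : ℕ}
    (A : Fin g → Matrix (Fin d) (Fin d) ℝ) (hA : ∀ i, (A i).IsSymm)
    (dd : Fin ℓ → ℕ)
    (Aj : ∀ j : Fin ℓ, Fin g → Matrix (Fin (dd j)) (Fin (dd j)) ℝ)
    (U : Matrix (Fin d) ((j : Fin ℓ) × Fin (dd j)) ℝ)
    (hU2 : U * Uᵀ = 1)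
    (hUA : ∀ i, Uᵀ * A i * U = Matrix.blockDiagonal' (fun j => Aj j i))
    (X : Fin g → Matrix (Fin n) (Fin n) ℝ) (hX : IsArvExt A X) :
    g * n ≤ ∑ j, dd j * Module.finrank ℝ (LinearMap.ker (LA (Aj j) X).mulVecLin) := by
  have hle := LinearMap.finrank_le_finrank_of_injective
    (hX.injective_homPencilOnKer hA hU2 hUA (k := 1))
  simpa [Module.finrank_pi_fintype, Module.finrank_linearMap, Module.finrank_matrix,
    Module.finrank_fintype_fun_eq_card, mul_comm] using hle

/-- if `A` is unitarily equivalent to `⊕_j A^j` and `X` is an Arveson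
extreme point of `D_A(n)`, then `gn ≤ Σ_j d_j · dim ker L_{A^j}(X)`. -/
theorem arveson_kernel_count_direct_sum {g d n ℓ : ℕ}
    (A : Fin g → Matrix (Fin d) (Fin d) ℝ) (hA : ∀ i, (A i).IsSymm)
    (dd : Fin ℓ → ℕ)
    (Aj : ∀ j : Fin ℓ, Fin g → Matrix (Fin (dd j)) (Fin (dd j)) ℝ)
    (hAj : ∀ j i, ((Aj j) i).IsSymm)
    (U : Matrix (Fin d) ((j : Fin ℓ) × Fin (dd j)) ℝ)
    (hU1 : Uᵀ * U = 1) (hU2 : U * Uᵀ = 1)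
    (hUA : ∀ i, Uᵀ * A i * U = Matrix.blockDiagonal' (fun j => Aj j i))
    (X : Fin g → Matrix (Fin n) (Fin n) ℝ) (hX : IsArvExt A X) :
    g * n ≤ ∑ j, dd j * Module.finrank ℝ (LinearMap.ker (LA (Aj j) X).mulVecLin) :=
  arveson_kernel_count_direct_sum_general A hA dd Aj U hU2 hUA X hX
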